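/- (Sinai's Lemma for countable Markov shifts) If ψ : Σ(G) → ℝ is weakly Hölder continuous with var₁ψ < ∞, then there exists a bounded Hölder continuous function φ' : Σ(G) → ℝ such that φ := ψ + φ' − φ'∘σ is weakly Hölder continuous and one-sided, i.e., φ(x) = φ(y) whenever x_i = y_i for all i ≥ 0. Moreover, if ψ is bounded then φ is bounded. -/

import Mathlib

open scoped ENNReal Classical

/-- The two-sided countable Markov shift. -/
abbrev CMS {V : Type*} (E : V → V → Prop) : Type _ :=
  {x : ℤ → V // ∀ i : ℤ, E (x i) (x (i + 1))}

/-- The two-sided left shift. -/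
def shift2 {V : Type*} (E : V → V → Prop) : CMS E → CMS E :=
  fun x => ⟨fun i => x.1 (i + 1), fun i => x.2 (i + 1)⟩

/-- The natural metric on `Σ(G)`. -/
noncomputable def cmsDist {V : Type*} (E : V → V → Prop) (u v : CMS E) : ℝ :=
  if u = v then 0
  else Real.exp (-(sInf {n : ℕ | ∃ i : ℤ, i.natAbs = n ∧ u.1 i ≠ v.1 i} : ℕ))

/-- `ψ` is weakly Hölder continuous: `var_n ψ ≤ Cθⁿ` for `n ≥ 2`, where the `n`-th variation is
over pairs agreeing on coordinates `−(n−1), …, n−1`. -/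
def WeaklyHolder {V : Type*} (E : V → V → Prop) (ψ : CMS E → ℝ) : Prop :=
  ∃ C : ℝ, 0 < C ∧ ∃ θ : ℝ, 0 < θ ∧ θ < 1 ∧
    ∀ n : ℕ, 2 ≤ n → ∀ x y : CMS E,
      (∀ i : ℤ, -((n : ℤ) - 1) ≤ i → i ≤ (n : ℤ) - 1 → x.1 i = y.1 i) →
      ψ x - ψ y ≤ C * θ ^ n

/-- `φ` is one-sided: it only depends on the coordinates `i ≥ 0`. -/
def OneSided {V : Type*} (E : V → V → Prop) (φ : CMS E → ℝ) : Prop :=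
  ∀ x y : CMS E, (∀ i : ℤ, 0 ≤ i → x.1 i = y.1 i) → φ x = φ y

/-!
Choose for every vertex a backward path into it, and let `r x` be the point with the future
`x₀ x₁ …` of `x` continued into the past along the path chosen for `x₀`; so `r x` only depends on
the future of `x`. Put `φ' x = ∑ₙ (ψ(σⁿ(r x)) - ψ(σⁿ x))`. Telescoping gives
`ψ + φ' - φ' ∘ σ = ψ ∘ r + ∑ₙ (ψ(σⁿ⁺¹(r x)) - ψ(σⁿ(r (σ x))))`, which only sees the future of `x`.
Each series compares points agreeing on coordinates `≥ -n`, so its `n`-th term is `O(θⁿ)`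
(`var₁ ψ < ∞` covers `n = 0`); for `x`, `y` agreeing on `|i| < N` the terms are also
`O(θ^(N-n))`, and balancing the two bounds gives the Hölder estimates with rate `θ^(1/3)`.
-/

open Function

section CountableMarkovShift

variable {V : Type*} {E : V → V → Prop}

/-- `var_n ψ ≤ c`. -/
def VarLE (ψ : CMS E → ℝ) (n : ℕ) (c : ℝ) : Prop :=
  ∀ x y : CMS E, (∀ i : ℤ, -((n : ℤ) - 1) ≤ i → i ≤ (n : ℤ) - 1 → x.1 i = y.1 i) →
    |ψ x - ψ y| ≤ c

lemma WeaklyHolder.exists_varLE {ψ : CMS E → ℝ} (h : WeaklyHolder E ψ) :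
    ∃ C θ : ℝ, 0 < C ∧ 0 < θ ∧ θ < 1 ∧ ∀ n, 2 ≤ n → VarLE ψ n (C * θ ^ n) := by
  obtain ⟨C, hC, θ, hθ0, hθ1, hψ⟩ := h
  refine ⟨C, θ, hC, hθ0, hθ1, fun n hn x y hxy => abs_sub_le_iff.2 ⟨hψ n hn x y hxy, ?_⟩⟩
  exact hψ n hn y x fun i h₁ h₂ => (hxy i h₁ h₂).symm

lemma exists_varLE_one {ψ : CMS E → ℝ}
    (h : ∃ K : ℝ, ∀ x y : CMS E, x.1 0 = y.1 0 → ψ x - ψ y ≤ K) :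
    ∃ K, 0 ≤ K ∧ VarLE ψ 1 K := by
  obtain ⟨K, hK⟩ := h
  refine ⟨max K 0, le_max_right _ _, fun x y hxy => ?_⟩
  have h0 : x.1 0 = y.1 0 := hxy 0 (by norm_num) (by norm_num)
  exact abs_sub_le_iff.2
    ⟨(hK x y h0).trans (le_max_left _ _), (hK y x h0.symm).trans (le_max_left _ _)⟩

lemma shift2_iterate_apply (x : CMS E) (n : ℕ) (i : ℤ) :
    ((shift2 E)^[n] x).1 i = x.1 (i + n) := by
  induction n generalizing x with
  | zero => simp
  | succ k ih =>
    rw [iterate_succ_apply, ih]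
    show x.1 (i + k + 1) = x.1 (i + (k + 1 : ℕ))
    push_cast
    ring_nf

section ExtendPast

variable (hin : ∀ v : V, ∃ u, E u v)

noncomputable def pastChain (v : V) : ℕ → V
  | 0 => v
  | k + 1 => (hin (pastChain v k)).choose

lemma pastChain_succ (v : V) (k : ℕ) : E (pastChain hin v (k + 1)) (pastChain hin v k) :=
  (hin _).choose_spec

noncomputable def extendPast (x : CMS E) : CMS E :=
  ⟨fun i => if 0 ≤ i then x.1 i else pastChain hin (x.1 0) i.natAbs, by
    intro i
    dsimp only
    rcases lt_trichotomy i (-1) with hi | rfl | hi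
    · rw [if_neg (by omega), if_neg (by omega), show i.natAbs = (i + 1).natAbs + 1 by omega]
      exact pastChain_succ hin _ _
    · exact pastChain_succ hin _ 0
    · rw [if_pos (by omega), if_pos (by omega)]
      exact x.2 i⟩

lemma extendPast_apply_of_nonneg (x : CMS E) {i : ℤ} (hi : 0 ≤ i) :
    (extendPast hin x).1 i = x.1 i :=
  if_pos hi

lemma shift2_extendPast_apply_of_nonneg (x : CMS E) {i : ℤ} (hi : 0 ≤ i) :
    (shift2 E (extendPast hin x)).1 i = (extendPast hin (shift2 E x)).1 i :=
  (extendPast_apply_of_nonneg hin x (by omega)).trans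
    (extendPast_apply_of_nonneg hin (shift2 E x) hi).symm

lemma extendPast_apply_eq {x y : CMS E} {M : ℤ} (hM : 0 ≤ M)
    (h : ∀ j, 0 ≤ j → j ≤ M → x.1 j = y.1 j) {i : ℤ} (hi : i ≤ M) :
    (extendPast hin x).1 i = (extendPast hin y).1 i := by
  by_cases hi0 : 0 ≤ i
  · rw [extendPast_apply_of_nonneg hin x hi0, extendPast_apply_of_nonneg hin y hi0]
    exact h i hi0 hi
  · simp only [extendPast, if_neg hi0, h 0 le_rfl hM]

lemma extendPast_eq_of_agree {x y : CMS E} (h : ∀ i, 0 ≤ i → x.1 i = y.1 i) :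
    extendPast hin x = extendPast hin y :=
  Subtype.ext <| funext fun i =>
    extendPast_apply_eq hin (le_max_right i 0) (fun j hj _ => h j hj) (le_max_left i 0)

lemma extendPast_agree_window {x y : CMS E} {L : ℤ}
    (h : ∀ i, -L < i → i < L → x.1 i = y.1 i) :
    ∀ i, -L < i → i < L → (extendPast hin x).1 i = (extendPast hin y).1 i :=
  fun i h₁ h₂ =>
    extendPast_apply_eq hin (M := L - 1) (by omega) (fun j hj hj' => h j (by omega) (by omega))
      (by omega)

end ExtendPast

lemma abs_tsum_le_of_abs_le_geometric {t : ℕ → ℝ} {A r : ℝ} (hr0 : 0 ≤ r) (hr1 : r < 1)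
    (h : ∀ n, |t n| ≤ A * r ^ n) : |∑' n, t n| ≤ A / (1 - r) := by
  rw [div_eq_mul_inv]
  exact tsum_of_norm_bounded ((hasSum_geometric_of_lt_one hr0 hr1).mul_left A)
    fun n => (Real.norm_eq_abs _).trans_le (h n)

lemma summable_of_abs_le_geometric {t : ℕ → ℝ} {A r : ℝ} (hr0 : 0 ≤ r) (hr1 : r < 1)
    (h : ∀ n, |t n| ≤ A * r ^ n) : Summable t :=
  .of_norm_bounded ((summable_geometric_of_lt_one hr0 hr1).mul_left A)
    fun n => (Real.norm_eq_abs _).trans_le (h n)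

/-- The two bounds balance near `n = N / 2`; writing `θ = s³` keeps all exponents natural. -/
lemma abs_tsum_le_of_abs_le_min {t : ℕ → ℝ} {A s : ℝ} {N : ℕ} (hA : 0 ≤ A) (hs0 : 0 < s)
    (hs1 : s < 1) (hfar : ∀ n, |t n| ≤ A * (s ^ 3) ^ n)
    (hnear : ∀ n, n + 2 ≤ N → |t n| ≤ A * (s ^ 3) ^ (N - n)) :
    |∑' n, t n| ≤ A / (s * (1 - s)) * s ^ N := by
  have hle : ∀ n k, N + n ≤ k + 1 → A * s ^ k ≤ A / s * s ^ N * s ^ n := fun n k hk =>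
    calc A * s ^ k = A / s * s ^ (k + 1) := by field_simp; ring
      _ ≤ A / s * s ^ (N + n) := by
        have := pow_le_pow_of_le_one hs0.le hs1.le hk
        gcongr
      _ = A / s * s ^ N * s ^ n := by rw [pow_add, mul_assoc]
  have hterm : ∀ n, |t n| ≤ A / s * s ^ N * s ^ n := by
    intro n
    by_cases hn : N ≤ 2 * n + 1
    · exact (hfar n).trans (by rw [← pow_mul]; exact hle n _ (by omega))
    · exact (hnear n (by omega)).trans (by rw [← pow_mul]; exact hle n _ (by omega))
  calc |∑' n, t n| ≤ A / s * s ^ N / (1 - s) := abs_tsum_le_of_abs_le_geometric hs0.le hs1 hterm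
    _ = A / (s * (1 - s)) * s ^ N := by field_simp

def StableVarLE (ψ : CMS E → ℝ) (D θ : ℝ) : Prop :=
  ∀ a b : CMS E, (∀ i, 0 ≤ i → a.1 i = b.1 i) →
    ∀ n, |ψ ((shift2 E)^[n] a) - ψ ((shift2 E)^[n] b)| ≤ D * θ ^ n

lemma stableVarLE_of_varLE {ψ : CMS E → ℝ} {K C θ : ℝ} (hK0 : 0 ≤ K) (hC0 : 0 ≤ C)
    (hθ0 : 0 ≤ θ) (hθ1 : θ ≤ 1) (hK : VarLE ψ 1 K)
    (hC : ∀ m, 2 ≤ m → VarLE ψ m (C * θ ^ m)) : StableVarLE ψ (K + C) θ := by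
  intro a b hab n
  cases n with
  | zero =>
    simp only [iterate_zero, id_eq, pow_zero, mul_one]
    exact (hK a b fun i h₁ h₂ => hab i (by omega)).trans (by linarith)
  | succ n =>
    calc |ψ ((shift2 E)^[n + 1] a) - ψ ((shift2 E)^[n + 1] b)| ≤ C * θ ^ (n + 2) := by
          refine hC (n + 2) (by omega) _ _ fun i h₁ _ => ?_
          rw [shift2_iterate_apply, shift2_iterate_apply]
          exact hab _ (by push_cast at h₁ ⊢; omega)
      _ = C * θ * θ ^ (n + 1) := by ring
      _ ≤ (K + C) * θ ^ (n + 1) := by gcongr; nlinarith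

lemma abs_sub_iterate_le_of_agree {ψ : CMS E → ℝ} {C θ : ℝ}
    (hC : ∀ m, 2 ≤ m → VarLE ψ m (C * θ ^ m)) {a a' : CMS E} {L n : ℕ}
    (h : ∀ i : ℤ, -(L : ℤ) < i → i < L → a.1 i = a'.1 i) (hn : n + 2 ≤ L) :
    |ψ ((shift2 E)^[n] a) - ψ ((shift2 E)^[n] a')| ≤ C * θ ^ (L - n) := by
  refine hC (L - n) (by omega) _ _ fun i h₁ h₂ => ?_
  rw [shift2_iterate_apply, shift2_iterate_apply]
  exact h _ (by omega) (by omega)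

noncomputable def orbitDiffSum (ψ : CMS E → ℝ) (a b : CMS E) : ℝ :=
  ∑' n, (ψ ((shift2 E)^[n] a) - ψ ((shift2 E)^[n] b))

section OrbitDiffSum

variable {ψ : CMS E → ℝ} {D θ : ℝ}

lemma StableVarLE.summable (hψ : StableVarLE ψ D θ) (hθ0 : 0 ≤ θ) (hθ1 : θ < 1)
    {a b : CMS E} (hab : ∀ i, 0 ≤ i → a.1 i = b.1 i) :
    Summable fun n => ψ ((shift2 E)^[n] a) - ψ ((shift2 E)^[n] b) :=
  summable_of_abs_le_geometric hθ0 hθ1 (hψ a b hab)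

lemma StableVarLE.abs_orbitDiffSum_le (hψ : StableVarLE ψ D θ) (hθ0 : 0 ≤ θ) (hθ1 : θ < 1)
    {a b : CMS E} (hab : ∀ i, 0 ≤ i → a.1 i = b.1 i) :
    |orbitDiffSum ψ a b| ≤ D / (1 - θ) :=
  abs_tsum_le_of_abs_le_geometric hθ0 hθ1 (hψ a b hab)

lemma StableVarLE.abs_orbitDiffSum_sub_le {C s : ℝ} (hψ : StableVarLE ψ D (s ^ 3))
    (hC : ∀ m, 2 ≤ m → VarLE ψ m (C * (s ^ 3) ^ m)) (hCD : C ≤ D) (hs0 : 0 < s) (hs1 : s < 1)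
    {a b a' b' : CMS E} (hab : ∀ i, 0 ≤ i → a.1 i = b.1 i)
    (hab' : ∀ i, 0 ≤ i → a'.1 i = b'.1 i) {L : ℕ}
    (ha : ∀ i : ℤ, -(L : ℤ) < i → i < L → a.1 i = a'.1 i)
    (hb : ∀ i : ℤ, -(L : ℤ) < i → i < L → b.1 i = b'.1 i) :
    |orbitDiffSum ψ a b - orbitDiffSum ψ a' b'| ≤ 2 * D / (s * (1 - s)) * s ^ L := by
  have hs3 : s ^ 3 < 1 := pow_lt_one₀ hs0.le hs1 (by norm_num)
  have hD : 0 ≤ D := (abs_nonneg _).trans <| (hψ a a (fun _ _ => rfl) 0).trans_eq (by simp)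
  rw [orbitDiffSum, orbitDiffSum, ← (hψ.summable (by positivity) hs3 hab).tsum_sub
    (hψ.summable (by positivity) hs3 hab')]
  refine abs_tsum_le_of_abs_le_min (by positivity) hs0 hs1 (fun n => ?_) (fun n hn => ?_)
  · calc _ ≤ D * (s ^ 3) ^ n + D * (s ^ 3) ^ n :=
          (abs_sub _ _).trans (add_le_add (hψ a b hab n) (hψ a' b' hab' n))
      _ = 2 * D * (s ^ 3) ^ n := by ring
  · have hCD' : C * (s ^ 3) ^ (L - n) ≤ D * (s ^ 3) ^ (L - n) := by gcongr
    calc _ = |(ψ ((shift2 E)^[n] a) - ψ ((shift2 E)^[n] a'))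
            - (ψ ((shift2 E)^[n] b) - ψ ((shift2 E)^[n] b'))| := by congr 1; ring
      _ ≤ C * (s ^ 3) ^ (L - n) + C * (s ^ 3) ^ (L - n) := (abs_sub _ _).trans
          (add_le_add (abs_sub_iterate_le_of_agree hC ha hn)
            (abs_sub_iterate_le_of_agree hC hb hn))
      _ ≤ 2 * D * (s ^ 3) ^ (L - n) := by linarith

end OrbitDiffSum

section Telescope

variable {ψ : CMS E → ℝ}

lemma orbitDiffSum_eq_add_shift {a b : CMS E}
    (h : Summable fun n => ψ ((shift2 E)^[n] a) - ψ ((shift2 E)^[n] b)) :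
    orbitDiffSum ψ a b = ψ a - ψ b + orbitDiffSum ψ (shift2 E a) (shift2 E b) := by
  simp only [orbitDiffSum, h.tsum_eq_zero_add, iterate_zero, id_eq, iterate_succ_apply]

lemma orbitDiffSum_sub_orbitDiffSum {a b c : CMS E}
    (hac : Summable fun n => ψ ((shift2 E)^[n] a) - ψ ((shift2 E)^[n] c))
    (hbc : Summable fun n => ψ ((shift2 E)^[n] b) - ψ ((shift2 E)^[n] c)) :
    orbitDiffSum ψ a c - orbitDiffSum ψ b c = orbitDiffSum ψ a b := by
  rw [orbitDiffSum, orbitDiffSum, ← hac.tsum_sub hbc]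
  exact tsum_congr fun n => by ring

lemma StableVarLE.add_orbitDiffSum_sub_shift {D θ : ℝ} (hψ : StableVarLE ψ D θ) (hθ0 : 0 ≤ θ)
    (hθ1 : θ < 1) {a b c : CMS E} (hab : ∀ i, 0 ≤ i → a.1 i = b.1 i)
    (hc : ∀ i, 0 ≤ i → c.1 i = (shift2 E b).1 i) :
    ψ b + orbitDiffSum ψ a b - orbitDiffSum ψ c (shift2 E b)
      = ψ a + orbitDiffSum ψ (shift2 E a) c := by
  have hab' : ∀ i, 0 ≤ i → (shift2 E a).1 i = (shift2 E b).1 i := fun i hi =>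
    hab (i + 1) (by omega)
  rw [orbitDiffSum_eq_add_shift (hψ.summable hθ0 hθ1 hab),
    ← orbitDiffSum_sub_orbitDiffSum (hψ.summable hθ0 hθ1 hab') (hψ.summable hθ0 hθ1 hc)]
  ring

end Telescope

lemma cmsDist_eq_exp {x y : CMS E} (hxy : x ≠ y) :
    ∃ N : ℕ, cmsDist E x y = Real.exp (-N) ∧ ∀ i : ℤ, -(N : ℤ) < i → i < N → x.1 i = y.1 i := by
  refine ⟨_, if_neg hxy, fun i h₁ h₂ => ?_⟩
  by_contra hne
  have := Nat.sInf_le (s := {n : ℕ | ∃ i : ℤ, i.natAbs = n ∧ x.1 i ≠ y.1 i}) ⟨i, rfl, hne⟩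
  omega

lemma abs_sub_le_mul_cmsDist_rpow {f : CMS E → ℝ} {M s : ℝ} (hs0 : 0 < s) (hs1 : s < 1)
    (h : ∀ x y : CMS E, ∀ N : ℕ, (∀ i : ℤ, -(N : ℤ) < i → i < N → x.1 i = y.1 i) →
      |f x - f y| ≤ M * s ^ N)
    (x y : CMS E) : |f x - f y| ≤ M * cmsDist E x y ^ (-Real.log s) := by
  have hα : -Real.log s ≠ 0 := (neg_pos.2 (Real.log_neg hs0 hs1)).ne'
  by_cases hxy : x = y
  · simp [hxy, cmsDist, Real.zero_rpow hα]
  obtain ⟨N, hd, hagree⟩ := cmsDist_eq_exp hxy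
  rw [hd, ← Real.exp_mul, neg_mul_neg, ← Real.log_pow, Real.exp_log (by positivity)]
  exact h x y N hagree

section SinaiTransfer

variable (hin : ∀ v : V, ∃ u, E u v) (ψ : CMS E → ℝ)

noncomputable def sinaiTransfer (x : CMS E) : ℝ :=
  orbitDiffSum ψ (extendPast hin x) x

variable {hin ψ} {D θ : ℝ}

lemma StableVarLE.add_sinaiTransfer_sub_shift (hψ : StableVarLE ψ D θ) (hθ0 : 0 ≤ θ)
    (hθ1 : θ < 1) (x : CMS E) :
    ψ x + sinaiTransfer hin ψ x - sinaiTransfer hin ψ (shift2 E x)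
      = ψ (extendPast hin x) + orbitDiffSum ψ (shift2 E (extendPast hin x))
          (extendPast hin (shift2 E x)) :=
  hψ.add_orbitDiffSum_sub_shift hθ0 hθ1 (fun _ => extendPast_apply_of_nonneg hin x)
    (fun _ => extendPast_apply_of_nonneg hin _)

lemma StableVarLE.oneSided_sinaiTransfer (hψ : StableVarLE ψ D θ) (hθ0 : 0 ≤ θ) (hθ1 : θ < 1) :
    OneSided E fun x => ψ x + sinaiTransfer hin ψ x - sinaiTransfer hin ψ (shift2 E x) := by
  intro x y hxy
  simp only [hψ.add_sinaiTransfer_sub_shift hθ0 hθ1, extendPast_eq_of_agree hin hxy,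
    extendPast_eq_of_agree hin (x := shift2 E x) (y := shift2 E y) fun i hi =>
      hxy (i + 1) (by omega)]

lemma StableVarLE.abs_sinaiTransfer_le (hψ : StableVarLE ψ D θ) (hθ0 : 0 ≤ θ) (hθ1 : θ < 1)
    (x : CMS E) : |sinaiTransfer hin ψ x| ≤ D / (1 - θ) :=
  hψ.abs_orbitDiffSum_le hθ0 hθ1 fun _ => extendPast_apply_of_nonneg hin x

variable {C s : ℝ}

lemma StableVarLE.abs_sinaiTransfer_sub_le (hψ : StableVarLE ψ D (s ^ 3))
    (hC : ∀ m, 2 ≤ m → VarLE ψ m (C * (s ^ 3) ^ m)) (hCD : C ≤ D) (hs0 : 0 < s) (hs1 : s < 1)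
    (x y : CMS E) :
    |sinaiTransfer hin ψ x - sinaiTransfer hin ψ y|
      ≤ 2 * D / (s * (1 - s)) * cmsDist E x y ^ (-Real.log s) :=
  abs_sub_le_mul_cmsDist_rpow hs0 hs1 (fun x y _ hxy =>
    hψ.abs_orbitDiffSum_sub_le hC hCD hs0 hs1 (fun _ => extendPast_apply_of_nonneg hin x)
      (fun _ => extendPast_apply_of_nonneg hin y) (extendPast_agree_window hin hxy) hxy) x y

lemma StableVarLE.weaklyHolder_sinaiTransfer (hψ : StableVarLE ψ D (s ^ 3))
    (hC : ∀ m, 2 ≤ m → VarLE ψ m (C * (s ^ 3) ^ m)) (hC0 : 0 < C) (hCD : C ≤ D) (hs0 : 0 < s)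
    (hs1 : s < 1) :
    WeaklyHolder E fun x => ψ x + sinaiTransfer hin ψ x - sinaiTransfer hin ψ (shift2 E x) := by
  have hs3 : s ^ 3 < 1 := pow_lt_one₀ hs0.le hs1 (by norm_num)
  refine ⟨C + 2 * D / (s * (1 - s)) / s, by have := hC0.le.trans hCD; positivity, s, hs0, hs1,
    fun m hm x y hxy => ?_⟩
  have hfut : ∀ j, 0 ≤ j → j ≤ (m : ℤ) - 1 → x.1 j = y.1 j := fun j hj hj' =>
    hxy j (by omega) hj'
  have hpast := abs_sub_iterate_le_of_agree (n := 0) hC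
    (extendPast_agree_window hin (L := m) fun i h₁ h₂ => hxy i (by omega) (by omega)) (by omega)
  have hfuture := hψ.abs_orbitDiffSum_sub_le hC hCD hs0 hs1 (L := m - 1)
    (a := shift2 E (extendPast hin x)) (b := extendPast hin (shift2 E x))
    (a' := shift2 E (extendPast hin y)) (b' := extendPast hin (shift2 E y))
    (fun _ => shift2_extendPast_apply_of_nonneg hin x)
    (fun _ => shift2_extendPast_apply_of_nonneg hin y)
    (fun i _ h₂ => extendPast_apply_eq hin (M := m - 1) (by omega) hfut (by omega))
    (fun i _ h₂ => extendPast_apply_eq hin (M := m - 2) (by omega)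
      (fun j hj hj' => hxy (j + 1) (by omega) (by omega)) (by omega))
  have hθs : (s ^ 3) ^ m ≤ s ^ m := by
    rw [← pow_mul]; exact pow_le_pow_of_le_one hs0.le hs1.le (by omega)
  have hsm : s ^ (m - 1) = s ^ m / s := by
    rw [eq_div_iff hs0.ne', ← pow_succ, Nat.sub_add_cancel (by omega)]
  simp only [iterate_zero, id_eq, Nat.sub_zero] at hpast
  dsimp only
  rw [hψ.add_sinaiTransfer_sub_shift (by positivity) hs3,
    hψ.add_sinaiTransfer_sub_shift (by positivity) hs3]
  calc _ ≤ C * (s ^ 3) ^ m + 2 * D / (s * (1 - s)) * s ^ (m - 1) := by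
        linarith [(abs_le.1 hpast).2, (abs_le.1 hfuture).2]
    _ ≤ (C + 2 * D / (s * (1 - s)) / s) * s ^ m := by
        rw [hsm, add_mul, show 2 * D / (s * (1 - s)) * (s ^ m / s)
          = 2 * D / (s * (1 - s)) / s * s ^ m by ring]
        gcongr

end SinaiTransfer

end CountableMarkovShift

theorem stmt12_general {V : Type*} (E : V → V → Prop)
    (hin : ∀ v : V, ∃ u : V, E u v)
    (ψ : CMS E → ℝ) (hψ : WeaklyHolder E ψ)
    (hvar1 : ∃ K : ℝ, ∀ x y : CMS E, x.1 0 = y.1 0 → ψ x - ψ y ≤ K) :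
    ∃ φ' : CMS E → ℝ,
      (∃ K : ℝ, ∀ x : CMS E, |φ' x| ≤ K) ∧
      (∃ C : ℝ, 0 < C ∧ ∃ α : ℝ, 0 < α ∧
        ∀ x y : CMS E, |φ' x - φ' y| ≤ C * (cmsDist E x y) ^ α) ∧
      WeaklyHolder E (fun x => ψ x + φ' x - φ' (shift2 E x)) ∧
      OneSided E (fun x => ψ x + φ' x - φ' (shift2 E x)) ∧
      ((∃ K : ℝ, ∀ x : CMS E, |ψ x| ≤ K) →
        ∃ K : ℝ, ∀ x : CMS E, |ψ x + φ' x - φ' (shift2 E x)| ≤ K) := by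
  obtain ⟨C, θ, hC0, hθ0, hθ1, hC⟩ := hψ.exists_varLE
  obtain ⟨K, hK0, hK⟩ := exists_varLE_one hvar1
  obtain ⟨s, hs0, hs1, rfl⟩ : ∃ s : ℝ, 0 < s ∧ s < 1 ∧ s ^ 3 = θ :=
    ⟨θ ^ ((3 : ℕ) : ℝ)⁻¹, by positivity, Real.rpow_lt_one hθ0.le hθ1 (by norm_num),
      Real.rpow_inv_natCast_pow hθ0.le (by norm_num)⟩
  have hψs := stableVarLE_of_varLE hK0 hC0.le hθ0.le hθ1.le hK hC
  have hCD : C ≤ K + C := by linarith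
  have hbound := hψs.abs_sinaiTransfer_le (hin := hin) hθ0.le hθ1
  refine ⟨sinaiTransfer hin ψ, ⟨_, hbound⟩, ⟨2 * (K + C) / (s * (1 - s)), ?_, -Real.log s,
    neg_pos.2 (Real.log_neg hs0 hs1), hψs.abs_sinaiTransfer_sub_le hC hCD hs0 hs1⟩,
    hψs.weaklyHolder_sinaiTransfer hC hC0 hCD hs0 hs1, hψs.oneSided_sinaiTransfer hθ0.le hθ1, ?_⟩
  · have : 0 < 1 - s := by linarith
    positivity
  rintro ⟨M, hM⟩
  refine ⟨M + 2 * ((K + C) / (1 - s ^ 3)), fun x => ?_⟩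
  linarith [abs_sub (ψ x + sinaiTransfer hin ψ x) (sinaiTransfer hin ψ (shift2 E x)),
    abs_add_le (ψ x) (sinaiTransfer hin ψ x), hM x, hbound x, hbound (shift2 E x)]

/-- Sinai's Lemma for countable Markov shifts: if `ψ` is weakly Hölder continuous with
`var₁ψ < ∞`, there is a bounded Hölder continuous `φ'` such that `φ = ψ + φ' − φ'∘σ` is weakly
Hölder continuous and one-sided; moreover if `ψ` is bounded then `φ` is bounded. -/
theorem stmt12 {V : Type*} [Countable V] (E : V → V → Prop)
    (hin : ∀ v : V, ∃ u : V, E u v) (hout : ∀ v : V, ∃ w : V, E v w)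
    (ψ : CMS E → ℝ) (hψ : WeaklyHolder E ψ)
    (hvar1 : ∃ K : ℝ, ∀ x y : CMS E, x.1 0 = y.1 0 → ψ x - ψ y ≤ K) :
    ∃ φ' : CMS E → ℝ,
      (∃ K : ℝ, ∀ x : CMS E, |φ' x| ≤ K) ∧
      (∃ C : ℝ, 0 < C ∧ ∃ α : ℝ, 0 < α ∧
        ∀ x y : CMS E, |φ' x - φ' y| ≤ C * (cmsDist E x y) ^ α) ∧
      WeaklyHolder E (fun x => ψ x + φ' x - φ' (shift2 E x)) ∧
      OneSided E (fun x => ψ x + φ' x - φ' (shift2 E x)) ∧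
      ((∃ K : ℝ, ∀ x : CMS E, |ψ x| ≤ K) →
        ∃ K : ℝ, ∀ x : CMS E, |ψ x + φ' x - φ' (shift2 E x)| ≤ K) :=
  stmt12_general E hin ψ hψ hvar1
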